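/- arXiv:1902.09827 — 9 statements merged into one kernel-verified Lean document; each statement's English description precedes it below -/
import Mathlib

section
/- Let X be a real Hilbert space, let ρ > −1, and let A : X ⇉ X be maximally ρ-comonotone. Then the range of Id + A⁻¹ is all of X, i.e., {u + x : (x,u) ∈ gra A} = X. -/
open RealInnerProductSpace

variable {X : Type*} [NormedAddCommGroup X] [InnerProductSpace ℝ X] [CompleteSpace X]

/-- `A` is `ρ`-comonotone. -/
def Comonotone (ρ : ℝ) (A : X → Set X) : Prop :=
  ∀ ⦃x u y v : X⦄, u ∈ A x → v ∈ A y → ρ * ‖u - v‖ ^ 2 ≤ ⟪x - y, u - v⟫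

/-- `A` is maximally `ρ`-comonotone. -/
def MaxComonotone (ρ : ℝ) (A : X → Set X) : Prop :=
  Comonotone ρ A ∧ ∀ B : X → Set X, Comonotone ρ B → (∀ x, A x ⊆ B x) → ∀ x, B x ⊆ A x

section Aux
open Filter Topology
set_option linter.unusedSectionVars false

noncomputable def gF (y v x u : X) : ℝ := ⟪x, v⟫ + ⟪y, u⟫ - ⟪y, v⟫ + ‖x‖^2/2 + ‖u‖^2/2

lemma gF_eq (y v x u : X) : gF y v x u = ‖x + u‖^2/2 - ⟪x - y, u - v⟫ := by
  rw [gF, norm_add_sq_real, inner_sub_left, inner_sub_right, inner_sub_right]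
  ring

lemma gF_le {y0 v0 y v : X} (h : 0 ≤ ⟪y0 - y, v0 - v⟫) : gF y v y0 v0 ≤ ‖y0 + v0‖^2/2 := by
  rw [gF_eq]; linarith

lemma gF_lower (y v x u : X) : -(‖y + v‖^2/2) ≤ gF y v x u := by
  have h1 : gF y v x u + ‖y + v‖^2/2 = ‖x + v‖^2/2 + ‖u + y‖^2/2 := by
    rw [gF, norm_add_sq_real x v, norm_add_sq_real u y, norm_add_sq_real y v,
      real_inner_comm u y]
    ring
  nlinarith [sq_nonneg ‖x + v‖, sq_nonneg ‖u + y‖]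

lemma quad_comb (x x' : X) (t : ℝ) :
    ‖x + t • (x' - x)‖^2 = (1 - t)*‖x‖^2 + t*‖x'‖^2 - t*(1 - t)*‖x - x'‖^2 := by
  rw [norm_add_sq_real, norm_smul, real_inner_smul_right, inner_sub_right,
    real_inner_self_eq_norm_sq, Real.norm_eq_abs, mul_pow, sq_abs,
    norm_sub_sq_real x' x, norm_sub_sq_real x x', real_inner_comm x' x]
  ring

lemma gF_comb (y v x u x' u' : X) (t : ℝ) :
    gF y v (x + t • (x' - x)) (u + t • (u' - u)) =
      (1 - t)*gF y v x u + t*gF y v x' u' - t*(1 - t)/2*(‖x - x'‖^2 + ‖u - u'‖^2) := by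
  simp only [gF, inner_add_left, inner_add_right, real_inner_smul_left,
    real_inner_smul_right, inner_sub_left, inner_sub_right, quad_comb]
  ring

lemma rel_mem {ρ : ℝ} {A : X → Set X} (hA : MaxComonotone ρ A) {x u : X}
    (h : ∀ y v, v ∈ A y → ρ * ‖u - v‖ ^ 2 ≤ ⟪x - y, u - v⟫) : u ∈ A x := by
  have hBc : Comonotone ρ (fun y => A y ∪ {w | y = x ∧ w = u}) := by
    rintro a b c d (hb | ⟨he1, he2⟩) (hd | ⟨he3, he4⟩)
    · exact hA.1 hb hd
    · rw [he3, he4]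
      have h1 := h a b hb
      rwa [norm_sub_rev, ← neg_sub a x, ← neg_sub b u, inner_neg_neg] at h1
    · rw [he1, he2]; exact h c d hd
    · rw [he1, he2, he3, he4]; simp
  exact hA.2 _ hBc (fun y => Set.subset_union_left) x (Or.inr ⟨rfl, rfl⟩)

lemma graph_ne {ρ : ℝ} {A : X → Set X} (hA : MaxComonotone ρ A) : ∃ y v, v ∈ A y := by
  by_contra hc
  push_neg at hc
  exact hc 0 0 (rel_mem hA (fun y v hv => absurd hv (hc y v)))

lemma minty0 (C : X → Set X) (hC : MaxComonotone 0 C) : ∃ u c, c ∈ C u ∧ u + c = 0 := by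
  obtain ⟨y0, v0, hv0⟩ := graph_ne hC
  set S : Set ℝ := {s | ∃ x u : X, ∀ y v, v ∈ C y → gF y v x u ≤ s} with hSdef
  have hmemS : ∀ s : ℝ, (∃ x u : X, ∀ y v, v ∈ C y → gF y v x u ≤ s) → s ∈ S := fun s h => h
  have hS0 : (‖y0 + v0‖^2/2) ∈ S :=
    hmemS _ ⟨y0, v0, fun y v hv => gF_le (by simpa using hC.1 hv0 hv)⟩
  have hSne : S.Nonempty := ⟨_, hS0⟩
  have hSbdd : BddBelow S := by
    refine ⟨-(‖y0 + v0‖^2/2), ?_⟩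
    rintro s ⟨x, u, hxu⟩
    exact le_trans (gF_lower y0 v0 x u) (hxu y0 v0 hv0)
  set m := sInf S with hmdef
  -- minimizing sequence
  have hseq : ∀ n : ℕ, ∃ x u : X, ∀ y v, v ∈ C y → gF y v x u ≤ m + 1/((n:ℝ)+1) := by
    intro n
    have hpos : (0:ℝ) < 1/((n:ℝ)+1) := by positivity
    obtain ⟨s, hs, hlt⟩ := exists_lt_of_csInf_lt hSne (lt_add_of_pos_right m hpos)
    obtain ⟨x, u, h⟩ := hs
    exact ⟨x, u, fun y v hv => (h y v hv).trans hlt.le⟩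
  choose xs us hxs using hseq
  have hkey : ∀ n k : ℕ, ‖xs n - xs k‖^2 + ‖us n - us k‖^2 ≤ 4*(1/((n:ℝ)+1) + 1/((k:ℝ)+1)) := by
    intro n k
    have hmem : ((1-(1/2:ℝ))*(m+1/((n:ℝ)+1)) + (1/2)*(m+1/((k:ℝ)+1))
        - (1/2)*(1-(1/2:ℝ))/2*(‖xs n - xs k‖^2 + ‖us n - us k‖^2)) ∈ S := by
      refine hmemS _ ⟨xs n + (1/2:ℝ) • (xs k - xs n), us n + (1/2:ℝ) • (us k - us n),
        fun y v hv => ?_⟩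
      rw [gF_comb]
      have h1 := hxs n y v hv
      have h2 := hxs k y v hv
      nlinarith
    have hle := csInf_le hSbdd hmem
    nlinarith [hle]
  -- Cauchy
  have hbN : ∀ N n k : ℕ, N ≤ n → N ≤ k →
      ‖xs n - xs k‖^2 + ‖us n - us k‖^2 ≤ 8/((N:ℝ)+1) := by
    intro N n k hn hk
    have h1 := hkey n k
    have hni : 1/((n:ℝ)+1) ≤ 1/((N:ℝ)+1) := by
      apply one_div_le_one_div_of_le (by positivity)
      have : (N:ℝ) ≤ n := by exact_mod_cast hn
      linarith
    have hki : 1/((k:ℝ)+1) ≤ 1/((N:ℝ)+1) := by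
      apply one_div_le_one_div_of_le (by positivity)
      have : (N:ℝ) ≤ k := by exact_mod_cast hk
      linarith
    calc ‖xs n - xs k‖^2 + ‖us n - us k‖^2 ≤ 4*(1/((n:ℝ)+1) + 1/((k:ℝ)+1)) := h1
      _ ≤ 8/((N:ℝ)+1) := by
          have he : 8/((N:ℝ)+1) = 4*(1/((N:ℝ)+1) + 1/((N:ℝ)+1)) := by ring
          rw [he]; linarith
  have hb0 : Tendsto (fun N : ℕ => Real.sqrt (8/((N:ℝ)+1))) atTop (𝓝 0) := by
    have h1 : Tendsto (fun N : ℕ => 8/((N:ℝ)+1)) atTop (𝓝 0) := by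
      have := tendsto_one_div_add_atTop_nhds_zero_nat.const_mul (8:ℝ)
      simpa [mul_one_div, div_eq_mul_inv] using this
    have h2 : Tendsto (fun N : ℕ => Real.sqrt (8/((N:ℝ)+1))) atTop (𝓝 (Real.sqrt 0)) :=
      h1.sqrt
    simpa using h2
  have hcx : CauchySeq xs := by
    apply cauchySeq_of_le_tendsto_0 _ (fun n k N hn hk => ?_) hb0
    rw [dist_eq_norm]
    have h := hbN N n k hn hk
    have h2 : ‖xs n - xs k‖^2 ≤ 8/((N:ℝ)+1) := by nlinarith [sq_nonneg ‖us n - us k‖]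
    calc ‖xs n - xs k‖ = Real.sqrt (‖xs n - xs k‖^2) := (Real.sqrt_sq (norm_nonneg _)).symm
      _ ≤ Real.sqrt (8/((N:ℝ)+1)) := Real.sqrt_le_sqrt h2
  have hcu : CauchySeq us := by
    apply cauchySeq_of_le_tendsto_0 _ (fun n k N hn hk => ?_) hb0
    rw [dist_eq_norm]
    have h := hbN N n k hn hk
    have h2 : ‖us n - us k‖^2 ≤ 8/((N:ℝ)+1) := by nlinarith [sq_nonneg ‖xs n - xs k‖]
    calc ‖us n - us k‖ = Real.sqrt (‖us n - us k‖^2) := (Real.sqrt_sq (norm_nonneg _)).symm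
      _ ≤ Real.sqrt (8/((N:ℝ)+1)) := Real.sqrt_le_sqrt h2
  obtain ⟨xb, hxb⟩ := cauchySeq_tendsto_of_complete hcx
  obtain ⟨ub, hub⟩ := cauchySeq_tendsto_of_complete hcu
  -- limit bounds
  have hlim : ∀ y v, v ∈ C y → gF y v xb ub ≤ m := by
    intro y v hv
    have ht : Tendsto (fun n => gF y v (xs n) (us n)) atTop (𝓝 (gF y v xb ub)) := by
      simp only [gF]
      exact ((((hxb.inner tendsto_const_nhds).add (tendsto_const_nhds.inner hub)).sub
        tendsto_const_nhds).add ((hxb.norm.pow 2).div_const 2)).add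
        ((hub.norm.pow 2).div_const 2)
    have h2 : Tendsto (fun n : ℕ => m + 1/((n:ℝ)+1)) atTop (𝓝 m) := by
      have h3 : Tendsto (fun n : ℕ => m + 1/((n:ℝ)+1)) atTop (𝓝 (m + 0)) :=
        tendsto_const_nhds.add tendsto_one_div_add_atTop_nhds_zero_nat
      simpa using h3
    exact le_of_tendsto_of_tendsto' ht h2 (fun n => hxs n y v hv)
  -- m ≥ ‖xb+ub‖²/2
  have hmlb : ‖xb + ub‖^2/2 ≤ m := by
    by_cases hrel : ∀ y v, v ∈ C y → 0 * ‖ub - v‖^2 ≤ ⟪xb - y, ub - v⟫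
    · have hmem := rel_mem hC hrel
      have h := hlim xb ub hmem
      rw [gF_eq] at h
      simpa using h
    · push_neg at hrel
      obtain ⟨y, v, hv, hneg⟩ := hrel
      have h1 := hlim y v hv
      rw [gF_eq] at h1
      simp only [zero_mul] at hneg
      linarith
  -- optimality against graph points
  have hopt : ∀ y v, v ∈ C y →
      m + (‖xb - y‖^2 + ‖ub - v‖^2)/2 ≤ ‖y + v‖^2/2 := by
    intro y v hv
    set D := ‖xb - y‖^2 + ‖ub - v‖^2 with hD
    have hD0 : 0 ≤ D := by positivity
    have hstep : ∀ t : ℝ, 0 < t → t < 1 → m + (1-t)*D/2 ≤ ‖y + v‖^2/2 := by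
      intro t ht0 ht1
      have hmem : ((1-t)*m + t*(‖y + v‖^2/2) - t*(1-t)/2*D) ∈ S := by
        refine hmemS _ ⟨xb + t • (y - xb), ub + t • (v - ub), fun y' v' hv' => ?_⟩
        rw [gF_comb]
        have h1 := hlim y' v' hv'
        have h2 : gF y' v' y v ≤ ‖y + v‖^2/2 := gF_le (by simpa using hC.1 hv hv')
        nlinarith
      have hle := csInf_le hSbdd hmem
      have h3 : t*(m + (1-t)*D/2) ≤ t*(‖y + v‖^2/2) := by nlinarith
      exact le_of_mul_le_mul_left h3 ht0
    refine le_of_forall_pos_le_add fun ε hε => ?_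
    set t := min (1/2 : ℝ) (ε/(D+1)) with htdef
    have ht0 : 0 < t := lt_min (by norm_num) (by positivity)
    have ht1 : t < 1 := lt_of_le_of_lt (min_le_left _ _) (by norm_num)
    have h := hstep t ht0 ht1
    have htD : t*D ≤ ε := by
      have h1 : t ≤ ε/(D+1) := min_le_right _ _
      have h2 : t*(D+1) ≤ ε := by
        rw [← le_div_iff₀ (by positivity : (0:ℝ) < D+1)]
        exact h1
      nlinarith
    nlinarith
  -- final inequality
  have hfin : ∀ y v, v ∈ C y → ‖xb + ub‖^2 ≤ ⟪ub + y, xb + v⟫ := by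
    intro y v hv
    have h1 := hopt y v hv
    have e1 := norm_add_sq_real y v
    have e2 := norm_sub_sq_real xb y
    have e3 := norm_sub_sq_real ub v
    have e4 := norm_add_sq_real xb ub
    have e5 : ⟪ub + y, xb + v⟫ = ⟪xb, ub⟫ + ⟪ub, v⟫ + ⟪xb, y⟫ + ⟪y, v⟫ := by
      rw [inner_add_left, inner_add_right, inner_add_right, real_inner_comm ub xb,
        real_inner_comm y xb]
      ring
    linarith
  have hrel2 : ∀ y v, v ∈ C y → 0 * ‖(-xb) - v‖^2 ≤ ⟪(-ub) - y, (-xb) - v⟫ := by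
    intro y v hv
    have h := hfin y v hv
    have he : ⟪(-ub) - y, (-xb) - v⟫ = ⟪ub + y, xb + v⟫ := by
      rw [show (-ub) - y = -(ub + y) by abel, show (-xb) - v = -(xb + v) by abel,
        inner_neg_neg]
    rw [he, zero_mul]
    nlinarith [sq_nonneg ‖xb + ub‖]
  have hmem2 : (-xb) ∈ C (-ub) := rel_mem hC hrel2
  have h0 := hfin _ _ hmem2
  have hsum : xb + ub = 0 := by
    have h1 : ⟪ub + -ub, xb + -xb⟫ = (0:ℝ) := by simp
    rw [h1] at h0
    have h2 : ‖xb + ub‖^2 = 0 := le_antisymm h0 (sq_nonneg _)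
    have h3 : ‖xb + ub‖ = 0 := by
      nlinarith [norm_nonneg (xb + ub)]
    rwa [norm_eq_zero] at h3
  exact ⟨-ub, -xb, hmem2, by rw [show -ub + -xb = -(xb + ub) by abel, hsum, neg_zero]⟩

lemma minty (C : X → Set X) (hC : MaxComonotone 0 C) (z : X) :
    ∃ u c, c ∈ C u ∧ u + c = z := by
  set Cz : X → Set X := fun u => {c | c + z ∈ C u} with hCzdef
  have hCz : MaxComonotone 0 Cz := by
    constructor
    · intro a b a' b' hb hb'
      have h := hC.1 hb hb'
      have he : b + z - (b' + z) = b - b' := by abel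
      rwa [he] at h
    · intro B hB hsub u c hc
      have : c + z ∈ C u := by
        apply rel_mem hC
        intro y v hv
        have hvz : v - z ∈ Cz y := by
          simp only [hCzdef, Set.mem_setOf_eq, sub_add_cancel]
          exact hv
        have h1 := hB hc (hsub y hvz)
        have he : c - (v - z) = c + z - v := by abel
        rwa [he] at h1
      exact this
  obtain ⟨u, c, hcz, hsum⟩ := minty0 Cz hCz
  refine ⟨u, c + z, hcz, ?_⟩
  rw [← add_assoc, hsum, zero_add]

end Aux

theorem stmt2 (A : X → Set X) (ρ : ℝ) (hρ : -1 < ρ) (hA : MaxComonotone ρ A) :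
    {z : X | ∃ x u, u ∈ A x ∧ z = u + x} = Set.univ := by
  have hρ0 : (0:ℝ) < 1 + ρ := by linarith
  ext z
  simp only [Set.mem_setOf_eq, Set.mem_univ, iff_true]
  set C : X → Set X := fun u => {c | u ∈ A ((1+ρ) • c + ρ • u)} with hCdef
  have hC : MaxComonotone 0 C := by
    constructor
    · intro a b a' b' hb hb'
      have h := hA.1 hb hb'
      have he : (1+ρ) • b + ρ • a - ((1+ρ) • b' + ρ • a') = (1+ρ) • (b - b') + ρ • (a - a') := by
        module
      rw [he, inner_add_left, real_inner_smul_left, real_inner_smul_left,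
        real_inner_self_eq_norm_sq] at h
      have h2 : 0 ≤ ⟪b - b', a - a'⟫ := by nlinarith [real_inner_comm (b - b') (a - a')]
      rw [zero_mul, real_inner_comm]
      exact h2
    · intro B hB hsub u c hc
      show u ∈ A ((1+ρ) • c + ρ • u)
      apply rel_mem hA
      intro y v hv
      have hcy : (1+ρ)⁻¹ • (y - ρ • v) ∈ C v := by
        simp only [hCdef, Set.mem_setOf_eq]
        have he : (1+ρ) • ((1+ρ)⁻¹ • (y - ρ • v)) + ρ • v = y := by
          rw [smul_inv_smul₀ (by linarith : (1:ℝ)+ρ ≠ 0)]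
          abel
        rwa [he]
      have h1 := hB hc (hsub v hcy)
      rw [zero_mul] at h1
      have he : (1+ρ) • c + ρ • u - y
          = (1+ρ) • (c - (1+ρ)⁻¹ • (y - ρ • v)) + ρ • (u - v) := by
        rw [smul_sub, smul_inv_smul₀ (by linarith : (1:ℝ)+ρ ≠ 0)]
        module
      rw [he, inner_add_left, real_inner_smul_left, real_inner_smul_left,
        real_inner_self_eq_norm_sq]
      nlinarith [real_inner_comm (c - (1+ρ)⁻¹ • (y - ρ • v)) (u - v)]
  obtain ⟨u, c, hcu, hsum⟩ := minty C hC ((1+ρ)⁻¹ • z)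
  refine ⟨(1+ρ) • c + ρ • u, u, hcu, ?_⟩
  have h1 : (1+ρ) • (u + c) = z := by
    rw [hsum, smul_inv_smul₀ (by linarith : (1:ℝ)+ρ ≠ 0)]
  have h2 : u + ((1+ρ) • c + ρ • u) = (1+ρ) • (u + c) := by module
  rw [h2, h1]
end

section
/- Let X be a real Hilbert space, let ρ > −1, and let A : X ⇉ X be ρ-comonotone. Then the resolvent J_A = (Id + A)⁻¹ is at most single-valued: if u ∈ J_A x and v ∈ J_A x then u = v. Consequently J_{A⁻¹} = Id − J_A is also at most single-valued. -/
open RealInnerProductSpace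

variable {X : Type*} [NormedAddCommGroup X] [InnerProductSpace ℝ X] [CompleteSpace X]

/-- The resOp `J_A = (Id + A)⁻¹` of `A`: `u ∈ J_A x ↔ x - u ∈ A u`. -/
def resOp (A : X → Set X) : X → Set X := fun x => {u | x - u ∈ A u}

/-
Two points `u, v` of `J_A x` give the pairs `(u, x - u), (v, x - v) ∈ gra A`, whose difference of
outputs is `-(u - v)`; comonotonicity then reads `ρ ‖u - v‖² ≤ -‖u - v‖²`, forcing `u = v` when
`ρ > -1`.
-/

section

variable {E : Type*} [NormedAddCommGroup E] [InnerProductSpace ℝ E] {ρ : ℝ} {A : E → Set E}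

theorem Comonotone.one_add_mul_norm_sub_sq_nonpos (hA : Comonotone ρ A) {x u v : E}
    (hu : u ∈ resOp A x) (hv : v ∈ resOp A x) : (1 + ρ) * ‖u - v‖ ^ 2 ≤ 0 := by
  have h := hA hu hv
  rw [show x - u - (x - v) = -(u - v) by abel, norm_neg, inner_neg_right,
    real_inner_self_eq_norm_sq] at h
  linarith

theorem Comonotone.resOp_subsingleton (hρ : -1 < ρ) (hA : Comonotone ρ A) (x : E) :
    (resOp A x).Subsingleton := fun u hu v hv => by
  have hsq : ‖u - v‖ ^ 2 = 0 :=
    le_antisymm (nonpos_of_mul_nonpos_right (hA.one_add_mul_norm_sub_sq_nonpos hu hv)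
      (by linarith)) (by positivity)
  simpa [sub_eq_zero] using hsq

end

theorem stmt3 (A : X → Set X) (ρ : ℝ) (hρ : -1 < ρ) (hA : Comonotone ρ A) :
    (∀ x u v : X, u ∈ resOp A x → v ∈ resOp A x → u = v) ∧
    (∀ x u v : X, (∃ w ∈ resOp A x, u = x - w) → (∃ w ∈ resOp A x, v = x - w) →
      u = v) := by
  refine ⟨fun x _ _ hu hv => hA.resOp_subsingleton hρ x hu hv, ?_⟩
  rintro x _ _ ⟨w, hw, rfl⟩ ⟨w', hw', rfl⟩
  rw [hA.resOp_subsingleton hρ x hw hw']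
end

section
/- Let X be a real Hilbert space, let ρ > −1, and let A : X ⇉ X be ρ-comonotone such that ran(Id + A) = X. Then A is maximally ρ-comonotone. -/
open RealInnerProductSpace

variable {X : Type*} [NormedAddCommGroup X] [InnerProductSpace ℝ X] [CompleteSpace X]

omit [CompleteSpace X] in
theorem Comonotone.eq_of_add_eq_add {ρ : ℝ} {B : X → Set X} (hB : Comonotone ρ B) (hρ : -1 < ρ)
    {x u y v : X} (hu : u ∈ B x) (hv : v ∈ B y) (h : x + u = y + v) : x = y ∧ u = v := by
  have hxy : x - y = v - u := by
    rw [sub_eq_sub_iff_add_eq_add, h, add_comm]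
  have key : ρ * ‖u - v‖ ^ 2 ≤ -‖u - v‖ ^ 2 := by
    simpa only [hxy, ← neg_sub u v, inner_neg_left, real_inner_self_eq_norm_sq] using hB hu hv
  have huv : u = v := by
    have : ‖u - v‖ ^ 2 ≤ 0 := by nlinarith [sq_nonneg ‖u - v‖]
    simpa [sub_eq_zero] using this
  exact ⟨sub_eq_zero.mp (by rw [hxy, huv, sub_self]), huv⟩

theorem stmt4 (A : X → Set X) (ρ : ℝ) (hρ : -1 < ρ) (hA : Comonotone ρ A)
    (hsurj : ∀ z : X, ∃ x u, u ∈ A x ∧ x + u = z) :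
    MaxComonotone ρ A := by
  refine ⟨hA, fun B hB hAB y v hv => ?_⟩
  obtain ⟨x, u, hu, hxu⟩ := hsurj (y + v)
  obtain ⟨rfl, rfl⟩ := hB.eq_of_add_eq_add hρ (hAB x hu) hv hxu
  exact hu
end

section
/- Let X be a real Hilbert space, let D be a nonempty subset of X, let T : D → X, let α > 0, and set A = T⁻¹ − Id (so that T = J_A). Then T is α-conically nonexpansive if and only if A is (1/(2α) − 1)-comonotone. -/
/-!
Write `N := (1 - α⁻¹) Id + α⁻¹ T`, the only operator with `T = (1 - α) Id + α N` on `D`.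
For `p = x - y` and `q = T x - T y` one has the identity
`⟪q, p - q⟫ - (1/(2α) - 1) ‖p - q‖² = (α/2) (‖p‖² - ‖N x - N y‖²)`,
so, as `α > 0`, `N` is nonexpansive on `D` exactly when the comonotonicity inequality holds
at every pair of graph points `(T x, x - T x)`, `(T y, y - T y)` of `A`.
-/

open RealInnerProductSpace

variable {X : Type*} [NormedAddCommGroup X] [InnerProductSpace ℝ X] [CompleteSpace X]

/-- The operator `A = T⁻¹ - Id` for `T : D → X`; its graph is `{(T x, x - T x) : x ∈ D}`. -/
def invMinusId (D : Set X) (T : X → X) : X → Set X :=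
  fun w => {u | ∃ x ∈ D, T x = w ∧ u = x - T x}

/-- `T` is `α`-conically nonexpansive on `D`: on `D`, `T = (1 - α) Id + α N` for some
operator `N` which is nonexpansive on `D`. -/
def ConNonexpOn (D : Set X) (α : ℝ) (T : X → X) : Prop :=
  ∃ N : X → X, (∀ x ∈ D, ∀ y ∈ D, ‖N x - N y‖ ≤ ‖x - y‖) ∧
    ∀ x ∈ D, T x = (1 - α) • x + α • N x

section

variable {E : Type*} [NormedAddCommGroup E] [InnerProductSpace ℝ E]

lemma inner_sub_sub_mul_norm_sq_eq {α : ℝ} (hα : α ≠ 0) (p q : E) :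
    ⟪q, p - q⟫ - (1 / (2 * α) - 1) * ‖p - q‖ ^ 2
      = α / 2 * (‖p‖ ^ 2 - ‖(1 - α⁻¹) • p + α⁻¹ • q‖ ^ 2) := by
  obtain ⟨d, rfl⟩ : ∃ d, q = p - d := ⟨p - q, (sub_sub_cancel p q).symm⟩
  have hcomb : (1 - α⁻¹) • p + α⁻¹ • (p - d) = p - α⁻¹ • d := by module
  rw [sub_sub_cancel, hcomb, norm_sub_sq_real, norm_smul, inner_smul_right, inner_sub_left,
    real_inner_self_eq_norm_sq, mul_pow, Real.norm_eq_abs, sq_abs]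
  field_simp
  ring

lemma norm_conical_le_iff_comonotone {α : ℝ} (hα : 0 < α) (p q : E) :
    ‖(1 - α⁻¹) • p + α⁻¹ • q‖ ≤ ‖p‖ ↔ (1 / (2 * α) - 1) * ‖p - q‖ ^ 2 ≤ ⟪q, p - q⟫ := by
  rw [← sub_nonneg (b := (1 / (2 * α) - 1) * _), inner_sub_sub_mul_norm_sq_eq hα.ne',
    mul_nonneg_iff_of_pos_left (half_pos hα), sub_nonneg,
    sq_le_sq₀ (norm_nonneg _) (norm_nonneg _)]

variable {D : Set E} {T : E → E} {α : ℝ}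

lemma conNonexpOn_iff (hα : α ≠ 0) :
    ConNonexpOn D α T ↔ ∀ x ∈ D, ∀ y ∈ D,
      ‖((1 - α⁻¹) • x + α⁻¹ • T x) - ((1 - α⁻¹) • y + α⁻¹ • T y)‖ ≤ ‖x - y‖ := by
  constructor
  · rintro ⟨N, hN, hT⟩ x hx y hy
    have hNeq : ∀ z ∈ D, (1 - α⁻¹) • z + α⁻¹ • T z = N z := fun z hz => by
      simp only [hT z hz, smul_add, smul_smul, mul_sub, mul_one, inv_mul_cancel₀ hα]
      module
    rw [hNeq x hx, hNeq y hy]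
    exact hN x hx y hy
  · refine fun hN => ⟨_, hN, fun x _ => ?_⟩
    simp only [smul_add, smul_smul, mul_sub, mul_one, mul_inv_cancel₀ hα]
    module

lemma comonotone_invMinusId_iff {ρ : ℝ} :
    Comonotone ρ (invMinusId D T) ↔ ∀ x ∈ D, ∀ y ∈ D,
      ρ * ‖(x - T x) - (y - T y)‖ ^ 2 ≤ ⟪T x - T y, (x - T x) - (y - T y)⟫ := by
  constructor
  · exact fun hA x hx y hy => hA ⟨x, hx, rfl, rfl⟩ ⟨y, hy, rfl, rfl⟩
  · rintro hA _ _ _ _ ⟨x, hx, rfl, rfl⟩ ⟨y, hy, rfl, rfl⟩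
    exact hA x hx y hy

end

theorem stmt10_general (D : Set X) (T : X → X) (α : ℝ) (hα : 0 < α) :
    ConNonexpOn D α T ↔ Comonotone (1 / (2 * α) - 1) (invMinusId D T) := by
  rw [conNonexpOn_iff hα.ne', comonotone_invMinusId_iff]
  refine forall₂_congr fun x _ => forall₂_congr fun y _ => ?_
  have hdiff : ((1 - α⁻¹) • x + α⁻¹ • T x) - ((1 - α⁻¹) • y + α⁻¹ • T y)
      = (1 - α⁻¹) • (x - y) + α⁻¹ • (T x - T y) := by module
  rw [hdiff, sub_sub_sub_comm x (T x) y (T y)]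
  exact norm_conical_le_iff_comonotone hα (x - y) (T x - T y)

theorem stmt10 (D : Set X) (hD : D.Nonempty) (T : X → X) (α : ℝ) (hα : 0 < α) :
    ConNonexpOn D α T ↔ Comonotone (1 / (2 * α) - 1) (invMinusId D T) :=
  stmt10_general D T α hα
end

section
/- Let X be a real Hilbert space, let D be a nonempty subset of X, let T : D → X, let α > 0, and set A = T⁻¹ − Id. Then [T is α-conically nonexpansive and D = X] if and only if A is maximally (1/(2α) − 1)-comonotone. -/
set_option linter.unusedSectionVars false
set_option maxHeartbeats 1000000


open RealInnerProductSpace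

variable {X : Type*} [NormedAddCommGroup X] [InnerProductSpace ℝ X] [CompleteSpace X]

lemma key_id {α : ℝ} (h : α ≠ 0) (a b : X) :
    ⟪(1 - α) • a + α • b, α • (a - b)⟫ - (1 / (2 * α) - 1) * ‖α • (a - b)‖ ^ 2
      = (α / 2) * (‖a‖ ^ 2 - ‖b‖ ^ 2) := by
  have h1 : ‖α • (a - b)‖ ^ 2 = α ^ 2 * ‖a - b‖ ^ 2 := by
    rw [norm_smul]; simp [mul_pow, sq_abs]
  have h2 : ‖a - b‖ ^ 2 = ‖a‖ ^ 2 - 2 * ⟪a, b⟫ + ‖b‖ ^ 2 := norm_sub_sq_real a b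
  have h3 : ⟪(1 - α) • a + α • b, α • (a - b)⟫
      = α * ((1 - α) * (‖a‖ ^ 2 - ⟪a, b⟫) + α * (⟪a, b⟫ - ‖b‖ ^ 2)) := by
    rw [inner_add_left, real_inner_smul_left, real_inner_smul_left,
      real_inner_smul_right, real_inner_smul_right, inner_sub_right, inner_sub_right,
      real_inner_self_eq_norm_sq, real_inner_self_eq_norm_sq, real_inner_comm b a]
    ring
  rw [h1, h2, h3]
  field_simp
  ring

lemma pair_iff {α : ℝ} (hα : 0 < α) (a b : X) :
    (1 / (2 * α) - 1) * ‖α • (a - b)‖ ^ 2 ≤ ⟪(1 - α) • a + α • b, α • (a - b)⟫ ↔ ‖b‖ ≤ ‖a‖ := by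
  rw [← sub_nonneg, key_id hα.ne']
  constructor
  · intro h
    have h2 : ‖b‖ ^ 2 ≤ ‖a‖ ^ 2 := by nlinarith
    nlinarith [norm_nonneg a, norm_nonneg b]
  · intro h
    have h2 : ‖b‖ ^ 2 ≤ ‖a‖ ^ 2 := by nlinarith [norm_nonneg b]
    nlinarith

lemma diff_w {α : ℝ} (x y zx zy : X) :
    ((1 - α) • x + α • zx) - ((1 - α) • y + α • zy) = (1 - α) • (x - y) + α • (zx - zy) := by
  module

lemma diff_u {α : ℝ} (x y zx zy : X) :
    α • (x - zx) - α • (y - zy) = α • ((x - y) - (zx - zy)) := by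
  module

lemma sub_T {α : ℝ} (x z : X) : x - ((1 - α) • x + α • z) = α • (x - z) := by
  module

/-- The comonotonicity inequality between two "graph points" is equivalent to
the nonexpansiveness inequality. -/

lemma pair_iff' {α : ℝ} (hα : 0 < α) (x y zx zy : X) :
    (1 / (2 * α) - 1) * ‖(x - ((1 - α) • x + α • zx)) - (y - ((1 - α) • y + α • zy))‖ ^ 2 ≤
      ⟪((1 - α) • x + α • zx) - ((1 - α) • y + α • zy),
        (x - ((1 - α) • x + α • zx)) - (y - ((1 - α) • y + α • zy))⟫ ↔
    ‖zx - zy‖ ≤ ‖x - y‖ := by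
  rw [sub_T x zx, sub_T y zy, diff_w, diff_u]
  exact pair_iff hα _ _

lemma sum_sum_norm_sub_sq {ι : Type*} (t : Finset ι) (w : ι → ℝ) (v : ι → X)
    (hw1 : ∑ p ∈ t, w p = 1) :
    ∑ p ∈ t, ∑ q ∈ t, w p * w q * ‖v p - v q‖ ^ 2
      = 2 * (∑ p ∈ t, w p * ‖v p‖ ^ 2) - 2 * ‖∑ p ∈ t, w p • v p‖ ^ 2 := by
  have hz : ‖∑ p ∈ t, w p • v p‖ ^ 2 = ∑ p ∈ t, ∑ q ∈ t, w p * w q * ⟪v p, v q⟫ := by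
    rw [← real_inner_self_eq_norm_sq, sum_inner]
    refine Finset.sum_congr rfl fun p hp => ?_
    rw [real_inner_smul_left, inner_sum, Finset.mul_sum]
    refine Finset.sum_congr rfl fun q hq => ?_
    rw [real_inner_smul_right]; ring
  rw [hz]
  have : ∀ p ∈ t, ∑ q ∈ t, w p * w q * ‖v p - v q‖ ^ 2
      = w p * ‖v p‖ ^ 2 + w p * (∑ q ∈ t, w q * ‖v q‖ ^ 2)
          - 2 * ∑ q ∈ t, w p * w q * ⟪v p, v q⟫ := by
    intro p hp
    have : ∀ q ∈ t, w p * w q * ‖v p - v q‖ ^ 2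
        = w p * w q * ‖v p‖ ^ 2 + w p * (w q * ‖v q‖ ^ 2) - 2 * (w p * w q * ⟪v p, v q⟫) := by
      intro q hq
      rw [norm_sub_sq_real]; ring
    rw [Finset.sum_congr rfl this, Finset.sum_sub_distrib, Finset.sum_add_distrib]
    have e1 : ∑ q ∈ t, w p * w q * ‖v p‖ ^ 2 = w p * ‖v p‖ ^ 2 := by
      rw [Finset.sum_congr rfl (fun q _ => show w p * w q * ‖v p‖ ^ 2
        = (w p * ‖v p‖ ^ 2) * w q by ring), ← Finset.mul_sum, hw1, mul_one]
    rw [e1, ← Finset.mul_sum, ← Finset.mul_sum]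
  rw [Finset.sum_congr rfl this, Finset.sum_sub_distrib, Finset.sum_add_distrib,
    ← Finset.sum_mul, hw1]
  rw [← Finset.mul_sum]
  ring

/-- Strong convexity of the norm at a minimal-norm point of a convex set. -/

lemma minnorm_strong {C : Set X} (hC : Convex ℝ C) {z w : X} (hz : z ∈ C) (hw : w ∈ C)
    (hmin : ∀ u ∈ C, ‖z‖ ≤ ‖u‖) :
    ‖z - w‖ ^ 2 ≤ 2 * ‖w‖ ^ 2 - 2 * ‖z‖ ^ 2 := by
  have hm : (1/2 : ℝ) • z + (1/2 : ℝ) • w ∈ C :=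
    hC hz hw (by norm_num) (by norm_num) (by norm_num)
  have h1 : ‖z‖ ≤ ‖(1/2 : ℝ) • z + (1/2 : ℝ) • w‖ := hmin _ hm
  have h2 : ‖(1/2 : ℝ) • z + (1/2 : ℝ) • w‖ = (1/2) * ‖z + w‖ := by
    rw [← smul_add, norm_smul]; simp
  have h3 : ‖z + w‖ * ‖z + w‖ + ‖z - w‖ * ‖z - w‖ = 2 * (‖z‖ * ‖z‖ + ‖w‖ * ‖w‖) :=
    by simpa only [sq] using parallelogram_law_with_norm ℝ z w
  rw [h2] at h1
  nlinarith [norm_nonneg (z + w), norm_nonneg z]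

lemma kirszbraun_finset (S : Finset X) (hS : S.Nonempty) (N : X → X)
    (hN : ∀ x ∈ S, ∀ y ∈ S, ‖N x - N y‖ ≤ ‖x - y‖) (x₀ : X) :
    ∃ z : X, ∀ y ∈ S, ‖z - N y‖ ≤ ‖x₀ - y‖ := by
  classical
  set f : X → X → ℝ := fun y z => ‖z - N y‖ ^ 2 - ‖x₀ - y‖ ^ 2 with hf
  set g : X → ℝ := fun z => S.sup' hS (fun y => f y z) with hg
  have hgcont : Continuous g := by
    rw [continuous_iff_continuousAt]
    intro z
    exact ContinuousAt.finset_sup'_apply hS (fun y _ => by fun_prop)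
  set K : Set X := convexHull ℝ (N '' ↑S) with hK
  have hKcp : IsCompact K := (S.finite_toSet.image N).isCompact_convexHull ℝ
  have hKconv : Convex ℝ K := convex_convexHull _ _
  have hKne : K.Nonempty :=
    ⟨N hS.choose, subset_convexHull _ _ ⟨hS.choose, hS.choose_spec, rfl⟩⟩
  obtain ⟨z₀, hz₀K, hz₀min⟩ := hKcp.exists_isMinOn hKne hgcont.continuousOn
  set Q := g z₀ with hQ
  by_cases hQpos : Q ≤ 0
  · refine ⟨z₀, fun y hy => ?_⟩
    have h1 : f y z₀ ≤ Q := Finset.le_sup' (fun y => f y z₀) hy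
    have h2 : ‖z₀ - N y‖ ^ 2 ≤ ‖x₀ - y‖ ^ 2 := by
      simp only [hf] at h1; linarith
    have h3 := Real.sqrt_le_sqrt h2
    rwa [Real.sqrt_sq (norm_nonneg _), Real.sqrt_sq (norm_nonneg _)] at h3
  push_neg at hQpos
  exfalso
  set Act : Finset X := S.filter (fun y => Q ≤ f y z₀) with hAct
  have hActS : Act ⊆ S := Finset.filter_subset _ _
  have hActne : Act.Nonempty := by
    obtain ⟨y, hy, hyeq⟩ := Finset.exists_mem_eq_sup' hS (fun y => f y z₀)
    exact ⟨y, Finset.mem_filter.2 ⟨hy, le_of_eq hyeq⟩⟩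
  set H : Set X := convexHull ℝ (N '' ↑Act) with hH
  have hHK : H ⊆ K := convexHull_mono (Set.image_mono (by exact_mod_cast hActS))
  by_cases hz₀H : z₀ ∈ H
  -- Case A : z₀ in the convex hull of active centers
  · have himg : (N '' ↑Act : Set X) = ↑(Act.image N) := by rw [Finset.coe_image]
    rw [hH, himg, Finset.convexHull_eq] at hz₀H
    obtain ⟨w, hw0, hw1, hwc⟩ := hz₀H
    set t : Finset X := Act.image N with ht
    have hz₀eq : ∑ p ∈ t, w p • p = z₀ := by
      rw [← hwc, Finset.centerMass_eq_of_sum_1 _ _ hw1]; rfl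
    have hch : ∀ p ∈ t, ∃ y, y ∈ Act ∧ N y = p := by
      intro p hp; simpa [ht, Finset.mem_image] using hp
    set Y : X → X := fun p => if h : ∃ y, y ∈ Act ∧ N y = p then h.choose else x₀ with hY
    have hYp : ∀ p ∈ t, Y p ∈ Act ∧ N (Y p) = p := by
      intro p hp
      have h := hch p hp
      simp only [hY, dif_pos h]
      exact h.choose_spec
    -- identity 1 : centered at z₀
    have E1 : ∑ p ∈ t, ∑ q ∈ t, w p * w q * ‖p - q‖ ^ 2
        = 2 * ∑ p ∈ t, w p * ‖p - z₀‖ ^ 2 := by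
      have := sum_sum_norm_sub_sq t w (fun p => p - z₀) hw1
      simp only [sub_sub_sub_cancel_right] at this
      rw [this]
      have hzero : ∑ p ∈ t, w p • (p - z₀) = 0 := by
        simp only [smul_sub]
        rw [Finset.sum_sub_distrib, hz₀eq, ← Finset.sum_smul, hw1, one_smul, sub_self]
      rw [hzero, norm_zero]
      ring
    -- identity 2 : vectors Y p - x₀
    have E2 : ∑ p ∈ t, ∑ q ∈ t, w p * w q * ‖(Y p - x₀) - (Y q - x₀)‖ ^ 2
        ≤ 2 * ∑ p ∈ t, w p * ‖Y p - x₀‖ ^ 2 := by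
      rw [sum_sum_norm_sub_sq t w (fun p => Y p - x₀) hw1]
      nlinarith [sq_nonneg ‖∑ p ∈ t, w p • (Y p - x₀)‖]
    -- pairwise comparison
    have hPQ : ∑ p ∈ t, ∑ q ∈ t, w p * w q * ‖p - q‖ ^ 2
        ≤ ∑ p ∈ t, ∑ q ∈ t, w p * w q * ‖(Y p - x₀) - (Y q - x₀)‖ ^ 2 := by
      refine Finset.sum_le_sum fun p hp => Finset.sum_le_sum fun q hq => ?_
      obtain ⟨hp1, hp2⟩ := hYp p hp
      obtain ⟨hq1, hq2⟩ := hYp q hq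
      have hne : ‖p - q‖ ≤ ‖(Y p - x₀) - (Y q - x₀)‖ := by
        rw [sub_sub_sub_cancel_right]
        calc ‖p - q‖ = ‖N (Y p) - N (Y q)‖ := by rw [hp2, hq2]
          _ ≤ ‖Y p - Y q‖ := hN _ (hActS hp1) _ (hActS hq1)
      exact mul_le_mul_of_nonneg_left (pow_le_pow_left₀ (norm_nonneg _) hne 2)
        (mul_nonneg (hw0 p hp) (hw0 q hq))
    -- active lower bound
    have hactb : ∀ p ∈ t, ‖Y p - x₀‖ ^ 2 + Q ≤ ‖p - z₀‖ ^ 2 := by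
      intro p hp
      obtain ⟨hp1, hp2⟩ := hYp p hp
      have hp3 := (Finset.mem_filter.1 hp1).2
      simp only [hf] at hp3
      rw [hp2, norm_sub_rev z₀ p, norm_sub_rev x₀ (Y p)] at hp3
      linarith
    have hsum1 : ∑ p ∈ t, w p * (‖Y p - x₀‖ ^ 2 + Q) ≤ ∑ p ∈ t, w p * ‖p - z₀‖ ^ 2 :=
      Finset.sum_le_sum fun p hp => mul_le_mul_of_nonneg_left (hactb p hp) (hw0 p hp)
    have hsum2 : ∑ p ∈ t, w p * (‖Y p - x₀‖ ^ 2 + Q)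
        = (∑ p ∈ t, w p * ‖Y p - x₀‖ ^ 2) + Q := by
      rw [Finset.sum_congr rfl (fun p _ => show w p * (‖Y p - x₀‖ ^ 2 + Q)
        = w p * ‖Y p - x₀‖ ^ 2 + Q * w p by ring), Finset.sum_add_distrib,
        ← Finset.mul_sum, hw1, mul_one]
    linarith [E1, E2, hPQ, hsum1]
  -- Case B : z₀ not in hull of active centers, move towards projection
  · have hHcp : IsCompact H := (Act.finite_toSet.image N).isCompact_convexHull ℝ
    have hHconv : Convex ℝ H := convex_convexHull _ _
    have hHne : H.Nonempty :=
      ⟨N hActne.choose, subset_convexHull _ _ ⟨hActne.choose, hActne.choose_spec, rfl⟩⟩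
    obtain ⟨p, hpH, hpproj⟩ :=
      exists_norm_eq_iInf_of_complete_convex hHne hHcp.isClosed.isComplete hHconv z₀
    have hvar : ∀ v ∈ H, ⟪z₀ - p, v - p⟫ ≤ 0 :=
      (norm_eq_iInf_iff_real_inner_le_zero hHconv hpH).1 hpproj
    set δ : ℝ := ‖z₀ - p‖ with hδdef
    have hδ : 0 < δ := by
      rw [hδdef, norm_pos_iff, sub_ne_zero]
      exact fun h => hz₀H (h ▸ hpH)
    have hinner : ∀ y ∈ Act, ⟪z₀ - N y, p - z₀⟫ ≤ -δ ^ 2 := by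
      intro y hy
      have h1 : ⟪z₀ - p, N y - p⟫ ≤ 0 :=
        hvar _ (subset_convexHull _ _ ⟨y, Finset.mem_coe.2 hy, rfl⟩)
      have h2 : ⟪z₀ - N y, p - z₀⟫ = ⟪z₀ - p, N y - p⟫ - ‖z₀ - p‖ ^ 2 := by
        rw [← real_inner_self_eq_norm_sq]
        have e1 : z₀ - N y = (z₀ - p) - (N y - p) := by abel
        have e2 : p - z₀ = -(z₀ - p) := by abel
        rw [e1, e2, inner_neg_right, inner_sub_left, real_inner_comm (N y - p)]
        ring
      rw [h2, hδdef]
      linarith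
    set M : ℝ := S.sup' hS (fun y => 2 * |⟪z₀ - N y, p - z₀⟫| + δ ^ 2) with hM
    have hMpos : 0 < M := by
      obtain ⟨y, hy⟩ := hS
      have := Finset.le_sup' (fun y => 2 * |⟪z₀ - N y, p - z₀⟫| + δ ^ 2) hy
      have h2 : (0:ℝ) ≤ 2 * |⟪z₀ - N y, p - z₀⟫| := by positivity
      nlinarith
    set Inact : Finset X := S.filter (fun y => f y z₀ < Q) with hInact
    set ε : ℝ := if h : Inact.Nonempty then Q - Inact.sup' h (fun y => f y z₀) else 1 with hε
    have hεpos : 0 < ε := by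
      rw [hε]
      split_ifs with h
      · have := (Finset.sup'_lt_iff h).2 (fun y hy => (Finset.mem_filter.1 hy).2)
        linarith
      · norm_num
    set τ : ℝ := min 1 (ε / (2 * M)) with hτ
    have hτ0 : 0 < τ := lt_min one_pos (by positivity)
    have hτ1 : τ ≤ 1 := min_le_left _ _
    have hτM : τ * M ≤ ε / 2 := by
      have h1 : τ ≤ ε / (2 * M) := min_le_right _ _
      calc τ * M ≤ (ε / (2 * M)) * M := by nlinarith
        _ = ε / 2 := by field_simp
    set z₁ : X := z₀ + τ • (p - z₀) with hz₁
    have hz₁K : z₁ ∈ K := by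
      have : z₁ = (1 - τ) • z₀ + τ • p := by rw [hz₁]; module
      rw [this]
      exact hKconv hz₀K (hHK hpH) (by linarith) hτ0.le (by ring)
    have hval : ∀ y : X, f y z₁ = f y z₀ + 2 * τ * ⟪z₀ - N y, p - z₀⟫ + τ ^ 2 * δ ^ 2 := by
      intro y
      have e : z₁ - N y = (z₀ - N y) + τ • (p - z₀) := by rw [hz₁]; abel
      simp only [hf]
      rw [e, norm_add_sq_real, real_inner_smul_right, norm_smul]
      simp only [Real.norm_eq_abs, mul_pow, sq_abs]
      rw [norm_sub_rev p z₀, ← hδdef]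
      ring
    have hlt : g z₁ < Q := by
      rw [hg]
      refine (Finset.sup'_lt_iff hS).2 fun y hy => ?_
      rw [hval y]
      by_cases hyact : Q ≤ f y z₀
      · have hmem : y ∈ Act := Finset.mem_filter.2 ⟨hy, hyact⟩
        have h1 := hinner y hmem
        have h2 : f y z₀ ≤ Q := Finset.le_sup' (fun y => f y z₀) hy
        have hττ : τ ^ 2 ≤ τ := by nlinarith
        have k1 : 2 * τ * ⟪z₀ - N y, p - z₀⟫ ≤ 2 * τ * (-δ ^ 2) :=
          mul_le_mul_of_nonneg_left h1 (by positivity)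
        have k2 : τ ^ 2 * δ ^ 2 ≤ τ * δ ^ 2 :=
          mul_le_mul_of_nonneg_right hττ (sq_nonneg δ)
        have k3 : 0 < τ * δ ^ 2 := by positivity
        linarith
      · push_neg at hyact
        have hymem : y ∈ Inact := Finset.mem_filter.2 ⟨hy, hyact⟩
        have hIne : Inact.Nonempty := ⟨y, hymem⟩
        have hεval : ε = Q - Inact.sup' hIne (fun y => f y z₀) := by
          rw [hε, dif_pos hIne]
        have h2 : f y z₀ ≤ Q - ε := by
          have := Finset.le_sup' (fun y => f y z₀) hymem
          rw [hεval]; linarith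
        have h3 : 2 * |⟪z₀ - N y, p - z₀⟫| + δ ^ 2 ≤ M :=
          Finset.le_sup' (fun y => 2 * |⟪z₀ - N y, p - z₀⟫| + δ ^ 2) hy
        have h4 : ⟪z₀ - N y, p - z₀⟫ ≤ |⟪z₀ - N y, p - z₀⟫| := le_abs_self _
        have hττ : τ ^ 2 ≤ τ := by nlinarith
        have k1 : 2 * τ * ⟪z₀ - N y, p - z₀⟫ ≤ 2 * τ * |⟪z₀ - N y, p - z₀⟫| :=
          mul_le_mul_of_nonneg_left h4 (by positivity)
        have k2 : τ ^ 2 * δ ^ 2 ≤ τ * δ ^ 2 :=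
          mul_le_mul_of_nonneg_right hττ (sq_nonneg δ)
        have k3 : τ * (2 * |⟪z₀ - N y, p - z₀⟫| + δ ^ 2) ≤ τ * M :=
          mul_le_mul_of_nonneg_left h3 hτ0.le
        nlinarith
    have := isMinOn_iff.1 hz₀min z₁ hz₁K
    rw [← hQ] at this
    linarith

lemma kirszbraun_point (D : Set X) (hD : D.Nonempty) (N : X → X)
    (hN : ∀ x ∈ D, ∀ y ∈ D, ‖N x - N y‖ ≤ ‖x - y‖) (x₀ : X) :
    ∃ z : X, ∀ y ∈ D, ‖z - N y‖ ≤ ‖x₀ - y‖ := by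
  classical
  obtain ⟨y₀, hy₀⟩ := hD
  set KK : Finset X → Set X := fun S =>
    {z | ∀ y ∈ S, y ∈ D → ‖z - N y‖ ≤ ‖x₀ - y‖} with hKK
  have hKKclosed : ∀ S, IsClosed (KK S) := by
    intro S
    have he : KK S = ⋂ y ∈ (S : Set X), {z | y ∈ D → ‖z - N y‖ ≤ ‖x₀ - y‖} := by
      ext z; simp [hKK]
    rw [he]
    refine isClosed_biInter fun y hy => ?_
    by_cases hyD : y ∈ D
    · have he2 : {z : X | y ∈ D → ‖z - N y‖ ≤ ‖x₀ - y‖} = {z | ‖z - N y‖ ≤ ‖x₀ - y‖} := by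
        ext z; simp [hyD]
      rw [he2]
      exact isClosed_le (by fun_prop) continuous_const
    · have he2 : {z : X | y ∈ D → ‖z - N y‖ ≤ ‖x₀ - y‖} = Set.univ := by
        ext z; simp [hyD]
      rw [he2]; exact isClosed_univ
  have hKKconv : ∀ S, Convex ℝ (KK S) := by
    intro S a ha b hb s t hs ht hst y hy hyD
    have he : (s • a + t • b) - N y = s • (a - N y) + t • (b - N y) := by
      have h1 : s • (a - N y) + t • (b - N y) = s • a + t • b - (s + t) • N y := by module
      rw [h1, hst, one_smul]
    calc ‖(s • a + t • b) - N y‖ = ‖s • (a - N y) + t • (b - N y)‖ := by rw [he]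
      _ ≤ ‖s • (a - N y)‖ + ‖t • (b - N y)‖ := norm_add_le _ _
      _ = s * ‖a - N y‖ + t * ‖b - N y‖ := by
          rw [norm_smul, norm_smul, Real.norm_eq_abs, Real.norm_eq_abs,
            abs_of_nonneg hs, abs_of_nonneg ht]
      _ ≤ s * ‖x₀ - y‖ + t * ‖x₀ - y‖ :=
          add_le_add (mul_le_mul_of_nonneg_left (ha y hy hyD) hs)
            (mul_le_mul_of_nonneg_left (hb y hy hyD) ht)
      _ = ‖x₀ - y‖ := by rw [← add_mul, hst, one_mul]
  have hKKne : ∀ S, (KK S).Nonempty := by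
    intro S
    by_cases h : (S.filter (· ∈ D)).Nonempty
    · obtain ⟨z, hz⟩ := kirszbraun_finset (S.filter (· ∈ D)) h N
        (fun x hx y hy => hN x (Finset.mem_filter.1 hx).2 y (Finset.mem_filter.1 hy).2) x₀
      exact ⟨z, fun y hy hyD => hz y (Finset.mem_filter.2 ⟨hy, hyD⟩)⟩
    · exact ⟨0, fun y hy hyD => absurd ⟨y, Finset.mem_filter.2 ⟨hy, hyD⟩⟩ h⟩
  have hKKanti : ∀ S T : Finset X, S ⊆ T → KK T ⊆ KK S :=
    fun S T h z hz y hy => hz y (h hy)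
  have hmin : ∀ S : Finset X, ∃ z, z ∈ KK S ∧ ∀ w ∈ KK S, ‖z‖ ≤ ‖w‖ := by
    intro S
    obtain ⟨v, hv, hveq⟩ := exists_norm_eq_iInf_of_complete_convex (hKKne S)
      (hKKclosed S).isComplete (hKKconv S) 0
    refine ⟨v, hv, fun w hw => ?_⟩
    have hne : Nonempty (KK S) := (hKKne S).to_subtype
    have h1 : (⨅ w : KK S, ‖(0:X) - w‖) ≤ ‖(0:X) - w‖ :=
      ciInf_le ⟨0, Set.forall_mem_range.2 fun _ => norm_nonneg _⟩ (⟨w, hw⟩ : KK S)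
    rw [← hveq] at h1
    simpa using h1
  choose zm hzm1 hzm2 using hmin
  have hbound : ∀ S : Finset X, ‖zm S‖ ≤ ‖N y₀‖ + ‖x₀ - y₀‖ := by
    intro S
    obtain ⟨w, hw⟩ := hKKne (insert y₀ S)
    have hwS : w ∈ KK S := hKKanti _ _ (Finset.subset_insert _ _) hw
    have h1 : ‖w - N y₀‖ ≤ ‖x₀ - y₀‖ := hw y₀ (Finset.mem_insert_self _ _) hy₀
    have h2 : ‖w‖ ≤ ‖w - N y₀‖ + ‖N y₀‖ := by
      calc ‖w‖ = ‖(w - N y₀) + N y₀‖ := by rw [sub_add_cancel]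
        _ ≤ ‖w - N y₀‖ + ‖N y₀‖ := norm_add_le _ _
    calc ‖zm S‖ ≤ ‖w‖ := hzm2 S w hwS
      _ ≤ ‖N y₀‖ + ‖x₀ - y₀‖ := by linarith
  set σ : ℝ := sSup (Set.range fun S => ‖zm S‖) with hσ
  have hbdd : BddAbove (Set.range fun S => ‖zm S‖) :=
    ⟨_, Set.forall_mem_range.2 hbound⟩
  have hrne : (Set.range fun S => ‖zm S‖).Nonempty := ⟨_, ⟨∅, rfl⟩⟩
  have hle_σ : ∀ S, ‖zm S‖ ≤ σ := fun S => le_csSup hbdd ⟨S, rfl⟩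
  obtain ⟨u, humono, hu_tendsto, hu_mem⟩ := exists_seq_tendsto_sSup hrne hbdd
  choose Sseq hSseq using fun n => hu_mem n
  set G : ℕ → Finset X := fun n => (Finset.range (n + 1)).biUnion Sseq with hG
  have hGmono : ∀ m n : ℕ, m ≤ n → G m ⊆ G n := by
    intro m n hmn
    exact Finset.biUnion_subset_biUnion_of_subset_left _
      (Finset.range_subset_range.2 (by omega))
  set zs : ℕ → X := fun n => zm (G n) with hzs
  have hzs_le : ∀ n, ‖zs n‖ ≤ σ := fun n => hle_σ _
  have hlower : ∀ n, u n ≤ ‖zs n‖ := by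
    intro n
    have hsub : Sseq n ⊆ G n :=
      Finset.subset_biUnion_of_mem Sseq (Finset.mem_range.2 (by omega))
    have h6 := hSseq n
    simp only at h6
    rw [← h6]
    exact hzm2 (Sseq n) (zs n) (hKKanti _ _ hsub (hzm1 (G n)))
  have htends : Filter.Tendsto (fun n => ‖zs n‖) Filter.atTop (nhds σ) :=
    tendsto_of_tendsto_of_tendsto_of_le_of_le hu_tendsto tendsto_const_nhds hlower hzs_le
  have hmononorm : ∀ m n : ℕ, m ≤ n → ‖zs m‖ ≤ ‖zs n‖ := by
    intro m n hmn
    exact hzm2 (G m) (zs n) (hKKanti _ _ (hGmono m n hmn) (hzm1 (G n)))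
  have hpair : ∀ k l : ℕ, k ≤ l → ‖zs k - zs l‖ ^ 2 ≤ 2 * ‖zs l‖ ^ 2 - 2 * ‖zs k‖ ^ 2 :=
    fun k l hkl => minnorm_strong (hKKconv (G k)) (hzm1 (G k))
      (hKKanti _ _ (hGmono k l hkl) (hzm1 (G l))) (hzm2 (G k))
  set b : ℕ → ℝ := fun n => Real.sqrt (2 * σ ^ 2 - 2 * ‖zs n‖ ^ 2) with hb
  have hcauchy : CauchySeq zs := by
    refine cauchySeq_of_le_tendsto_0 b (fun n m Nn hn hm => ?_) ?_
    · have key : ∀ k l : ℕ, Nn ≤ k → k ≤ l → dist (zs k) (zs l) ≤ b Nn := by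
        intro k l hk hkl
        have h1 := hpair k l hkl
        have h2 : ‖zs k - zs l‖ ^ 2 ≤ 2 * σ ^ 2 - 2 * ‖zs Nn‖ ^ 2 := by
          have h3 := hmononorm Nn k hk
          have h4 := hzs_le l
          have h5 : (0:ℝ) ≤ ‖zs Nn‖ := norm_nonneg _
          have h6 : (0:ℝ) ≤ ‖zs l‖ := norm_nonneg _
          have h7 : (0:ℝ) ≤ ‖zs k‖ := norm_nonneg _
          nlinarith
        rw [dist_eq_norm]
        rw [hb]
        rw [show ‖zs k - zs l‖ = Real.sqrt (‖zs k - zs l‖ ^ 2) by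
          rw [Real.sqrt_sq (norm_nonneg _)]]
        exact Real.sqrt_le_sqrt h2
      rcases le_total n m with h | h
      · exact key n m hn h
      · rw [dist_comm]; exact key m n hm h
    · have h0 : Filter.Tendsto (fun n => 2 * σ ^ 2 - 2 * ‖zs n‖ ^ 2)
          Filter.atTop (nhds 0) := by
        have := ((htends.pow 2).const_mul 2).const_sub (2 * σ ^ 2)
        simpa using this
      have := (Real.continuous_sqrt.tendsto 0).comp h0
      simpa [hb, Real.sqrt_zero, Function.comp_def] using this
  obtain ⟨zl, hzl⟩ := cauchySeq_tendsto_of_complete hcauchy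
  refine ⟨zl, fun y hyD => ?_⟩
  set ws : ℕ → X := fun n => zm (insert y (G n)) with hws
  have hwKK : ∀ n, ws n ∈ KK (G n) :=
    fun n => hKKanti _ _ (Finset.subset_insert _ _) (hzm1 _)
  have hwy : ∀ n, ‖ws n - N y‖ ≤ ‖x₀ - y‖ :=
    fun n => hzm1 (insert y (G n)) y (Finset.mem_insert_self _ _) hyD
  have hzw : ∀ n, ‖zs n - ws n‖ ^ 2 ≤ 2 * σ ^ 2 - 2 * ‖zs n‖ ^ 2 := by
    intro n
    have h1 := minnorm_strong (hKKconv (G n)) (hzm1 (G n)) (hwKK n) (hzm2 (G n))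
    have h2 := hle_σ (insert y (G n))
    have h3 : (0:ℝ) ≤ ‖ws n‖ := norm_nonneg _
    nlinarith
  have hzwb : ∀ n, ‖zs n - ws n‖ ≤ b n := by
    intro n
    rw [hb, show ‖zs n - ws n‖ = Real.sqrt (‖zs n - ws n‖ ^ 2) by
      rw [Real.sqrt_sq (norm_nonneg _)]]
    exact Real.sqrt_le_sqrt (hzw n)
  have hbnd : ∀ n, ‖zl - N y‖ ≤ ‖zl - zs n‖ + b n + ‖x₀ - y‖ := by
    intro n
    calc ‖zl - N y‖ = ‖(zl - zs n) + (zs n - ws n) + (ws n - N y)‖ := by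
          congr 1; abel
      _ ≤ ‖(zl - zs n) + (zs n - ws n)‖ + ‖ws n - N y‖ := norm_add_le _ _
      _ ≤ ‖zl - zs n‖ + ‖zs n - ws n‖ + ‖ws n - N y‖ := by
          have := norm_add_le (zl - zs n) (zs n - ws n); linarith
      _ ≤ ‖zl - zs n‖ + b n + ‖x₀ - y‖ := by
          have := hzwb n; have := hwy n; linarith
  have htend2 : Filter.Tendsto (fun n => ‖zl - zs n‖ + b n + ‖x₀ - y‖)
      Filter.atTop (nhds (0 + 0 + ‖x₀ - y‖)) := by
    refine Filter.Tendsto.add (Filter.Tendsto.add ?_ ?_) tendsto_const_nhds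
    · have := (tendsto_const_nhds (x := zl)).sub hzl
      have h2 := this.norm
      simpa using h2
    · have h0 : Filter.Tendsto (fun n => 2 * σ ^ 2 - 2 * ‖zs n‖ ^ 2)
          Filter.atTop (nhds 0) := by
        have := ((htends.pow 2).const_mul 2).const_sub (2 * σ ^ 2)
        simpa using this
      have := (Real.continuous_sqrt.tendsto 0).comp h0
      simpa [hb, Real.sqrt_zero, Function.comp_def] using this
  have := ge_of_tendsto htend2 (Filter.Eventually.of_forall hbnd)
  simpa using this

theorem stmt11 (D : Set X) (hD : D.Nonempty) (T : X → X) (α : ℝ) (hα : 0 < α) :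
    (ConNonexpOn D α T ∧ D = Set.univ) ↔
      MaxComonotone (1 / (2 * α) - 1) (invMinusId D T) := by
  constructor
  · rintro ⟨⟨N, hN, hT⟩, rfl'⟩
    have huniv : ∀ x : X, x ∈ D := by rw [rfl']; exact fun x => trivial
    have hcom : Comonotone (1 / (2 * α) - 1) (invMinusId D T) := by
      rintro w u w' v ⟨x, hx, rfl, rfl⟩ ⟨y, hy, rfl, rfl⟩
      rw [hT x hx, hT y hy]
      exact (pair_iff' hα x y (N x) (N y)).2 (hN x hx y hy)
    refine ⟨hcom, fun B hB hAB w u huB => ?_⟩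
    -- show u ∈ invMinusId D T w
    set x₀ := w + u with hx₀
    set z := x₀ - α⁻¹ • u with hz
    have hw : w = (1 - α) • x₀ + α • z := by
      rw [hz, smul_sub, smul_smul, mul_inv_cancel₀ hα.ne', hx₀]; module
    have hu : u = x₀ - ((1 - α) • x₀ + α • z) := by
      rw [← hw, hx₀]; abel
    have hmem : (x₀ - T x₀) ∈ B (T x₀) := hAB _ ⟨x₀, huniv x₀, rfl, rfl⟩
    have hineq := hB huB hmem
    rw [hu, hw, hT x₀ (huniv x₀)] at hineq
    have hz' : ‖z - N x₀‖ ≤ ‖x₀ - x₀‖ := (pair_iff' hα x₀ x₀ z (N x₀)).1 hineq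
    rw [sub_self, norm_zero] at hz'
    have hzN : z = N x₀ := by
      have := le_antisymm hz' (norm_nonneg _)
      rwa [norm_eq_zero, sub_eq_zero] at this
    refine ⟨x₀, huniv x₀, ?_, ?_⟩
    · rw [hT x₀ (huniv x₀), ← hzN, ← hw]
    · rw [hu, hT x₀ (huniv x₀), hzN]
  · rintro ⟨hcom, hmax⟩
    set N : X → X := fun x => x + α⁻¹ • (T x - x) with hNdef
    have hTN : ∀ x : X, T x = (1 - α) • x + α • N x := by
      intro x
      rw [hNdef]; simp only
      rw [smul_add, smul_smul, mul_inv_cancel₀ hα.ne']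
      module
    have hNne : ∀ x ∈ D, ∀ y ∈ D, ‖N x - N y‖ ≤ ‖x - y‖ := by
      intro x hx y hy
      have h1 : (x - T x) ∈ invMinusId D T (T x) := ⟨x, hx, rfl, rfl⟩
      have h2 : (y - T y) ∈ invMinusId D T (T y) := ⟨y, hy, rfl, rfl⟩
      have := hcom h1 h2
      rw [hTN x, hTN y] at this
      exact (pair_iff' hα x y (N x) (N y)).1 this
    have hDuniv : D = Set.univ := by
      by_contra hne
      obtain ⟨x₀, hx₀⟩ : ∃ x₀ : X, x₀ ∉ D := by
        by_contra h
        push_neg at h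
        exact hne (Set.eq_univ_of_forall h)
      obtain ⟨z, hzball⟩ := kirszbraun_point D hD N hNne x₀
      set w₀ := (1 - α) • x₀ + α • z with hw₀
      set u₀ := α • (x₀ - z) with hu₀
      set B : X → Set X := fun w => invMinusId D T w ∪ {u | w = w₀ ∧ u = u₀} with hBdef
      have hBcom : Comonotone (1 / (2 * α) - 1) B := by
        rintro w u w' v (hu | ⟨rfl, rfl⟩) (hv | ⟨rfl, rfl⟩)
        · exact hcom hu hv
        · -- old vs new
          obtain ⟨x, hx, rfl, rfl⟩ := hu
          rw [hTN x, hw₀]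
          have hx0 : x₀ - ((1-α) • x₀ + α • z) = α • (x₀ - z) := sub_T x₀ z
          rw [hu₀, ← hx0]
          exact (pair_iff' hα x x₀ (N x) z).2 (by
            have := hzball x hx
            rw [norm_sub_rev, ← norm_neg (x₀ - x)] at this
            simpa [neg_sub] using this)
        · obtain ⟨y, hy, rfl, rfl⟩ := hv
          rw [hTN y, hw₀]
          have hx0 : x₀ - ((1-α) • x₀ + α • z) = α • (x₀ - z) := sub_T x₀ z
          rw [hu₀, ← hx0]
          exact (pair_iff' hα x₀ y z (N y)).2 (by
            have := hzball y hy
            exact this)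
        · simp only [sub_self, norm_zero]
          rw [inner_zero_right]
          simp
      have hsub : ∀ w, invMinusId D T w ⊆ B w := fun w u hu => Or.inl hu
      have := hmax B hBcom hsub w₀ (Or.inr ⟨rfl, rfl⟩)
      obtain ⟨x, hx, hTx, hux⟩ := this
      have hxx₀ : x = x₀ := by
        have : x - T x = u₀ := hux.symm ▸ rfl
        have hxval : (x : X) = w₀ + u₀ := by
          have hsum : T x + (x - T x) = w₀ + u₀ := by rw [this, hTx]
          calc (x : X) = T x + (x - T x) := by abel
            _ = w₀ + u₀ := hsum
        have : w₀ + u₀ = x₀ := by rw [hw₀, hu₀]; module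
        rw [hxval, this]
      exact hx₀ (hxx₀ ▸ hx)
    refine ⟨⟨N, hNne, fun x _ => hTN x⟩, hDuniv⟩
end

section
/- Let X be a real Hilbert space and let T : X → X. Then T is nonexpansive if and only if T is the resolvent of a maximally (−1/2)-comonotone operator A : X ⇉ X, i.e., T = J_A = (Id + A)⁻¹ for some maximally (−1/2)-comonotone A. -/
open RealInnerProductSpace

variable {X : Type*} [NormedAddCommGroup X] [InnerProductSpace ℝ X] [CompleteSpace X]

/-- `T` is nonexpansive. -/
def Nonexpansive (T : X → X) : Prop := ∀ x y : X, ‖T x - T y‖ ≤ ‖x - y‖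

/-! Nonexpansiveness of `T` and `(-1/2)`-comonotonicity of `T⁻¹ - Id` are the same inequality,
read through `‖a + b‖² = ‖a‖² + 2⟪a, b⟫ + ‖b‖²` with `a = Tx - Ty` and `a + b = x - y`.
Maximality holds because a `ρ`-comonotone operator with `ρ > -1` has a single-valued
resolvent, while `T` is already defined everywhere. -/

section

variable {E : Type*} [AddCommGroup E]

/-- The operator `T⁻¹ - Id`, whose resolvent is `T`. -/
def invSubId (T : E → E) (u : E) : Set E := {w | T (u + w) = u}

theorem sub_mem_invSubId_iff {T : E → E} {x u : E} : x - u ∈ invSubId T u ↔ T x = u := by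
  simp only [invSubId, Set.mem_ofPred_eq, add_sub_cancel]

end

section

variable {E : Type*} [NormedAddCommGroup E] [InnerProductSpace ℝ E]

theorem neg_half_mul_norm_sq_le_inner_iff (a b : E) :
    -(1 / 2) * ‖b‖ ^ 2 ≤ ⟪a, b⟫ ↔ ‖a‖ ≤ ‖a + b‖ := by
  rw [← sq_le_sq₀ (norm_nonneg _) (norm_nonneg _), norm_add_sq_real]
  constructor <;> intro h <;> linarith

theorem Comonotone.eq_of_add_eq {ρ : ℝ} {B : E → Set E} (hB : Comonotone ρ B) (hρ : -1 < ρ)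
    {x u y v : E} (hu : u ∈ B x) (hv : v ∈ B y) (h : x + u = y + v) : x = y := by
  have huv : u - v = -(x - y) := by rw [neg_sub, sub_eq_sub_iff_add_eq_add, add_comm, h]
  have hle := hB hu hv
  rw [huv, norm_neg, inner_neg_right, real_inner_self_eq_norm_sq] at hle
  have hsq : ‖x - y‖ ^ 2 ≤ 0 := by nlinarith
  rwa [sq_nonpos_iff, norm_eq_zero, sub_eq_zero] at hsq

theorem Comonotone.nonexpansive_of_mem {A : E → Set E} (hA : Comonotone (-(1 / 2)) A)
    {T : E → E} (hT : ∀ x, x - T x ∈ A (T x)) : Nonexpansive T := by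
  intro x y
  have h := (neg_half_mul_norm_sq_le_inner_iff _ _).mp (hA (hT x) (hT y))
  rwa [show T x - T y + (x - T x - (y - T y)) = x - y by abel] at h

theorem Nonexpansive.comonotone_invSubId {T : E → E} (hT : Nonexpansive T) :
    Comonotone (-(1 / 2)) (invSubId T) := by
  intro x u y v (hu : T (x + u) = x) (hv : T (y + v) = y)
  rw [neg_half_mul_norm_sq_le_inner_iff, sub_add_sub_comm]
  simpa only [hu, hv] using hT (x + u) (y + v)

theorem invSubId_maximal (T : E → E) {ρ : ℝ} (hρ : -1 < ρ) {B : E → Set E}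
    (hB : Comonotone ρ B) (hsub : ∀ x, invSubId T x ⊆ B x) (x : E) :
    B x ⊆ invSubId T x := by
  intro w hw
  have hTz : x + w - T (x + w) ∈ B (T (x + w)) := hsub _ (sub_mem_invSubId_iff.mpr rfl)
  exact (hB.eq_of_add_eq hρ hw hTz (add_sub_cancel _ _).symm).symm

end

theorem stmt12 (T : X → X) :
    Nonexpansive T ↔
      ∃ A : X → Set X, MaxComonotone (-(1 / 2)) A ∧
        ∀ x u : X, T x = u ↔ x - u ∈ A u := by
  constructor
  · intro hT
    refine ⟨invSubId T, ⟨hT.comonotone_invSubId, fun B hB ↦ invSubId_maximal T ?_ hB⟩,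
      fun x u ↦ sub_mem_invSubId_iff.symm⟩
    norm_num
  · rintro ⟨A, ⟨hA, -⟩, hres⟩
    exact hA.nonexpansive_of_mem fun x ↦ (hres x (T x)).mp rfl
end

section
/- Let X be a real Hilbert space, let T : X → X, and let α ∈ (0,1). Then T is α-averaged if and only if T is the resolvent of a maximally ρ-comonotone operator A : X ⇉ X where ρ = 1/(2α) − 1 > −1/2 (equivalently, α = 1/(2(ρ + 1))). -/
/-!
Write `p = T x - T y` and `d = x - y`. For `ρ = 1/(2α) - 1` one has the identity
`α² ‖d‖² - ‖p - (1 - α) d‖² = 2α (⟪p, d - p⟫ - ρ ‖d - p‖²)`.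
The left side is nonnegative for all `x, y` exactly when `N = α⁻¹ (T - (1 - α) Id)` is
nonexpansive, and the right side exactly when the operator `A = T⁻¹ - Id`, whose resolvent is `T`,
is `ρ`-comonotone. Maximality is automatic: an operator whose resolvent is defined everywhere
admits no proper `ρ`-comonotone extension once `ρ > -1`.
-/

open RealInnerProductSpace

variable {X : Type*} [NormedAddCommGroup X] [InnerProductSpace ℝ X] [CompleteSpace X]

def Averaged (α : ℝ) (T : X → X) : Prop :=
  ∃ N : X → X, Nonexpansive N ∧ ∀ x : X, T x = (1 - α) • x + α • N x

def IsResolvent {G : Type*} [AddCommGroup G] (T : G → G) (A : G → Set G) : Prop :=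
  ∀ x u, T x = u ↔ x - u ∈ A u

theorem exists_isResolvent {G : Type*} [AddCommGroup G] (T : G → G) : ∃ A, IsResolvent T A :=
  ⟨fun u => {w | T (u + w) = u}, fun x u => by
    show T x = u ↔ T (u + (x - u)) = u
    rw [add_sub_cancel]⟩

section

variable {E : Type*} [NormedAddCommGroup E] [InnerProductSpace ℝ E]

theorem comonotone_inner_le_iff_norm_sub_smul_le {α : ℝ} (hα : 0 < α) (p d : E) :
    (1 / (2 * α) - 1) * ‖d - p‖ ^ 2 ≤ ⟪p, d - p⟫ ↔ ‖p - (1 - α) • d‖ ≤ α * ‖d‖ := by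
  have identity : (α * ‖d‖) ^ 2 - ‖p - (1 - α) • d‖ ^ 2 =
      2 * α * (⟪p, d - p⟫ - (1 / (2 * α) - 1) * ‖d - p‖ ^ 2) := by
    simp only [norm_sub_sq_real, inner_sub_right, inner_smul_right, norm_smul,
      real_inner_self_eq_norm_sq, Real.norm_eq_abs, mul_pow, sq_abs, real_inner_comm d p]
    field_simp
    ring
  rw [← pow_le_pow_iff_left₀ (norm_nonneg _) (by positivity) two_ne_zero,
    ← sub_nonneg (a := (α * ‖d‖) ^ 2), identity, mul_nonneg_iff_of_pos_left (by positivity),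
    sub_nonneg]

theorem averaged_iff {α : ℝ} (hα : 0 < α) {T : E → E} :
    Averaged α T ↔ ∀ x y, ‖(T x - T y) - (1 - α) • (x - y)‖ ≤ α * ‖x - y‖ := by
  constructor
  · rintro ⟨N, hN, hT⟩ x y
    have hdiff : (T x - T y) - (1 - α) • (x - y) = α • (N x - N y) := by
      rw [hT, hT]; module
    rw [hdiff, norm_smul, Real.norm_of_nonneg hα.le]
    exact mul_le_mul_of_nonneg_left (hN x y) hα.le
  · intro hT
    refine ⟨fun x => α⁻¹ • (T x - (1 - α) • x), fun x y => ?_, fun x => ?_⟩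
    · have hdiff : α⁻¹ • (T x - (1 - α) • x) - α⁻¹ • (T y - (1 - α) • y) =
          α⁻¹ • ((T x - T y) - (1 - α) • (x - y)) := by module
      rw [hdiff, norm_smul, Real.norm_of_nonneg (inv_nonneg.mpr hα.le), inv_mul_le_iff₀ hα]
      exact hT x y
    · rw [smul_smul, mul_inv_cancel₀ hα.ne', one_smul, add_sub_cancel]

variable {T : E → E} {A : E → Set E} {ρ : ℝ}

theorem IsResolvent.comonotone_iff (hres : IsResolvent T A) :
    Comonotone ρ A ↔
      ∀ x y, ρ * ‖(x - y) - (T x - T y)‖ ^ 2 ≤ ⟪T x - T y, (x - y) - (T x - T y)⟫ := by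
  have hdiff : ∀ x y : E, (x - T x) - (y - T y) = (x - y) - (T x - T y) := fun _ _ => by abel
  constructor
  · intro hA x y
    simpa only [hdiff] using hA ((hres x _).mp rfl) ((hres y _).mp rfl)
  · intro h x u y v hu hv
    have hTx : T (x + u) = x := (hres _ _).mpr (by rwa [add_sub_cancel_left])
    have hTy : T (y + v) = y := (hres _ _).mpr (by rwa [add_sub_cancel_left])
    have key := h (x + u) (y + v)
    rwa [hTx, hTy, show x + u - (y + v) - (x - y) = u - v by abel] at key

theorem IsResolvent.maxComonotone (hρ : -1 < ρ) (hA : Comonotone ρ A) (hres : IsResolvent T A) :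
    MaxComonotone ρ A := by
  refine ⟨hA, fun B hB hAB x w hw => ?_⟩
  -- `(T (x + w), x + w - T (x + w))` lies in the graph of `A ⊆ B`; comonotonicity of `B`
  -- against `(x, w)` forces `(ρ + 1) ‖T (x + w) - x‖² ≤ 0`.
  set y := T (x + w)
  have hy : x + w - y ∈ B y := hAB y ((hres _ _).mp rfl)
  have key := hB hw hy
  rw [show w - (x + w - y) = y - x by abel, show x - y = -(y - x) by abel, inner_neg_left,
    real_inner_self_eq_norm_sq] at key
  have hyx : ‖y - x‖ ^ 2 = 0 := by nlinarith [sq_nonneg ‖y - x‖]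
  rw [sq_eq_zero_iff, norm_eq_zero, sub_eq_zero] at hyx
  simpa only [add_sub_cancel_left] using (hres (x + w) x).mp hyx

theorem IsResolvent.comonotone_iff_averaged {α : ℝ} (hα : 0 < α) (hres : IsResolvent T A) :
    Comonotone (1 / (2 * α) - 1) A ↔ Averaged α T := by
  rw [hres.comonotone_iff, averaged_iff hα]
  exact forall₂_congr fun x y => comonotone_inner_le_iff_norm_sub_smul_le hα _ _

end

theorem stmt13_general (T : X → X) (α : ℝ) (hα0 : 0 < α) :
    Averaged α T ↔
      ∃ A : X → Set X, MaxComonotone (1 / (2 * α) - 1) A ∧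
        ∀ x u : X, T x = u ↔ x - u ∈ A u := by
  constructor
  · intro hT
    obtain ⟨A, hres⟩ := exists_isResolvent T
    have hρ : -1 < 1 / (2 * α) - 1 := by linarith [show 0 < 1 / (2 * α) by positivity]
    exact ⟨A, hres.maxComonotone hρ ((hres.comonotone_iff_averaged hα0).mpr hT), hres⟩
  · rintro ⟨A, hA, hres⟩
    exact (IsResolvent.comonotone_iff_averaged hα0 hres).mp hA.1

theorem stmt13 (T : X → X) (α : ℝ) (hα0 : 0 < α) (hα1 : α < 1) :
    Averaged α T ↔
      ∃ A : X → Set X, MaxComonotone (1 / (2 * α) - 1) A ∧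
        ∀ x u : X, T x = u ↔ x - u ∈ A u :=
  stmt13_general T α hα0
end

section
/- Let X be a real Hilbert space, let ρ ≥ −1/2, and let A : X ⇉ X be maximally ρ-comonotone. Then the zero set zer A = {x ∈ X : 0 ∈ A x} is closed and convex. -/
/-! By maximality, `0 ∈ A x` holds exactly when `(x, 0)` is comonotonically related to every
point `(y, v)` of the graph, that is, when `⟪v, x⟫ ≤ ⟪v, y⟫ - ρ‖v‖²`. So `zer A` is an
intersection of closed half-spaces. -/

open RealInnerProductSpace

variable {X : Type*} [NormedAddCommGroup X] [InnerProductSpace ℝ X] [CompleteSpace X]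

section

omit [CompleteSpace X]

variable {ρ : ℝ} {A : X → Set X}

lemma comonotone_pair_comm (x u y v : X) :
    ρ * ‖u - v‖ ^ 2 ≤ ⟪x - y, u - v⟫ ↔ ρ * ‖v - u‖ ^ 2 ≤ ⟪y - x, v - u⟫ := by
  rw [norm_sub_rev, ← neg_sub x y, ← neg_sub u v, inner_neg_neg]

def graphInsert (A : X → Set X) (x u : X) : X → Set X :=
  fun y => A y ∪ {w | y = x ∧ w = u}

lemma Comonotone.graphInsert (hA : Comonotone ρ A) {x u : X}
    (h : ∀ ⦃y v⦄, v ∈ A y → ρ * ‖u - v‖ ^ 2 ≤ ⟪x - y, u - v⟫) :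
    Comonotone ρ (graphInsert A x u) := by
  rintro p w q z (hw | ⟨rfl, rfl⟩) (hz | ⟨rfl, rfl⟩)
  · exact hA hw hz
  · exact (comonotone_pair_comm ..).1 (h hw)
  · exact h hz
  · simp

lemma MaxComonotone.mem_iff (hA : MaxComonotone ρ A) {x u : X} :
    u ∈ A x ↔ ∀ ⦃y v⦄, v ∈ A y → ρ * ‖u - v‖ ^ 2 ≤ ⟪x - y, u - v⟫ := by
  refine ⟨fun hu y v hv => hA.1 hu hv, fun h => ?_⟩
  exact hA.2 _ (hA.1.graphInsert h) (fun _ => Set.subset_union_left) x (Or.inr ⟨rfl, rfl⟩)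

lemma comonotone_zero_pair_iff (x y v : X) :
    ρ * ‖0 - v‖ ^ 2 ≤ ⟪x - y, 0 - v⟫ ↔ ⟪v, x⟫ ≤ ⟪v, y⟫ - ρ * ‖v‖ ^ 2 := by
  rw [zero_sub, norm_neg, inner_neg_right, real_inner_comm, inner_sub_right]
  constructor <;> intro h <;> linarith

lemma MaxComonotone.setOf_zero_mem_eq (hA : MaxComonotone ρ A) :
    {x | 0 ∈ A x} = ⋂ y, ⋂ v ∈ A y, {x | ⟪v, x⟫ ≤ ⟪v, y⟫ - ρ * ‖v‖ ^ 2} := by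
  ext x
  rw [Set.mem_ofPred_eq, hA.mem_iff]
  simp only [Set.mem_iInter, Set.mem_ofPred_eq, comonotone_zero_pair_iff]

end

theorem stmt14_general (A : X → Set X) (ρ : ℝ) (hA : MaxComonotone ρ A) :
    IsClosed {x : X | 0 ∈ A x} ∧ Convex ℝ {x : X | 0 ∈ A x} := by
  rw [hA.setOf_zero_mem_eq]
  constructor
  · exact isClosed_iInter fun y => isClosed_biInter fun v _ =>
      isClosed_le (continuous_const.inner continuous_id) continuous_const
  · exact convex_iInter fun y => convex_iInter₂ fun v _ =>
      convex_halfSpace_le (innerₗ X v).isLinear _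

theorem stmt14 (A : X → Set X) (ρ : ℝ) (hρ : -(1 / 2) ≤ ρ) (hA : MaxComonotone ρ A) :
    IsClosed {x : X | 0 ∈ A x} ∧ Convex ℝ {x : X | 0 ∈ A x} :=
  stmt14_general A ρ hA
end

section
/- Let X be a real Hilbert space and let N : X → X be a continuous linear operator with N* = −N and N² = −Id. Let λ ∈ [0,1), set T_λ = (1 − λ)Id + λN and A_λ = (T_λ)⁻¹ − Id. Then: (i) N is nonexpansive (indeed an isometry); (ii) A_λ = (λ/((1 − λ)² + λ²))·((1 − 2λ)Id − N); (iii) for all x ∈ X, ⟨x, A_λ x⟩ = (λ(1 − 2λ)/((1 − λ)² + λ²))‖x‖², so A_λ is ρ-monotone with ρ = λ(1 − 2λ)/(λ² + (1 − λ)²); and (iv) for λ > 0 and all x ∈ X, ⟨x, A_λ x⟩ = ((1 − 2λ)/(2λ))‖A_λ x‖², so A_λ is ρ-comonotone with ρ = (1 − 2λ)/(2λ). -/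
/-!
A skew-adjoint `N` with `N² = -Id` behaves like multiplication by `i`: for `L = a • Id + b • N`
one has `⟪x, L x⟫ = a ‖x‖²` and `‖L x‖² = (a² + b²) ‖x‖²`, and `L` is invertible with inverse
`(a² + b²)⁻¹ • (a • Id - b • N)`. Inverting `T_λ` this way gives
`A_λ = c • ((1 - 2λ) • Id - N)` with `c = λ / ((1 - λ)² + λ²)`, and both monotonicity constants are
read off the two identities, using `c ((1 - 2λ)² + 1) = 2λ` for the comonotone one.
-/

open RealInnerProductSpace

section SkewAdjoint

variable {E : Type*} [NormedAddCommGroup E] [InnerProductSpace ℝ E] {N : E →L[ℝ] E}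

theorem inner_apply_eq_neg_of_adjoint_eq_neg [CompleteSpace E]
    (hadj : ContinuousLinearMap.adjoint N = -N) (x y : E) : ⟪N x, y⟫ = -⟪x, N y⟫ := by
  rw [← ContinuousLinearMap.adjoint_inner_right, hadj, neg_apply, inner_neg_right]

variable (hN : ∀ x y : E, ⟪N x, y⟫ = -⟪x, N y⟫)
include hN

theorem inner_self_apply_eq_zero (x : E) : ⟪x, N x⟫ = 0 := by
  have h := hN x x
  rw [real_inner_comm] at h
  linarith

theorem norm_apply_eq_of_apply_apply_eq_neg (hN2 : ∀ x : E, N (N x) = -x) (x : E) :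
    ‖N x‖ = ‖x‖ := by
  have h : ‖N x‖ ^ 2 = ‖x‖ ^ 2 := by
    rw [← real_inner_self_eq_norm_sq, ← real_inner_self_eq_norm_sq, hN, hN2, inner_neg_right,
      neg_neg]
  exact (pow_left_inj₀ (norm_nonneg _) (norm_nonneg _) two_ne_zero).mp h

theorem inner_smul_add_smul_apply (a b : ℝ) (x : E) :
    ⟪x, a • x + b • N x⟫ = a * ‖x‖ ^ 2 := by
  rw [inner_add_right, real_inner_smul_right, real_inner_smul_right, inner_self_apply_eq_zero hN,
    real_inner_self_eq_norm_sq]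
  ring

theorem norm_smul_add_smul_apply_sq (hN2 : ∀ x : E, N (N x) = -x) (a b : ℝ) (x : E) :
    ‖a • x + b • N x‖ ^ 2 = (a ^ 2 + b ^ 2) * ‖x‖ ^ 2 := by
  have hxNx : ⟪N x, x⟫ = 0 := by rw [real_inner_comm, inner_self_apply_eq_zero hN]
  rw [← real_inner_self_eq_norm_sq, inner_add_left, real_inner_smul_left, real_inner_smul_left,
    inner_smul_add_smul_apply hN, inner_add_right, real_inner_smul_right, real_inner_smul_right,
    hxNx, real_inner_self_eq_norm_sq, norm_apply_eq_of_apply_apply_eq_neg hN hN2]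
  ring

end SkewAdjoint

theorem smul_add_smul_apply_inverse {E : Type*} [AddCommGroup E] [Module ℝ E] {N : E →ₗ[ℝ] E}
    (hN2 : ∀ x : E, N (N x) = -x) {a b : ℝ} (hab : a ^ 2 + b ^ 2 ≠ 0) (x : E) :
    a • ((a ^ 2 + b ^ 2)⁻¹ • (a • x - b • N x)) + b • N ((a ^ 2 + b ^ 2)⁻¹ • (a • x - b • N x))
      = x := by
  simp only [map_smul, map_sub, hN2]
  match_scalars
  · field_simp
  · ring

theorem resolvent_sub_id_apply_eq {E : Type*} [AddCommGroup E] [Module ℝ E] {N : E →ₗ[ℝ] E}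
    (hN2 : ∀ x : E, N (N x) = -x) {a b : ℝ} (hab : a ^ 2 + b ^ 2 ≠ 0) {T A : E → E}
    (hT : ∀ x : E, T x = a • x + b • N x) (hA : ∀ x : E, T x + A (T x) = x) (x : E) :
    A x = (a ^ 2 + b ^ 2)⁻¹ • (a • x - b • N x) - x := by
  have hTy : T ((a ^ 2 + b ^ 2)⁻¹ • (a • x - b • N x)) = x := by
    rw [hT]; exact smul_add_smul_apply_inverse hN2 hab x
  have hxy := hA ((a ^ 2 + b ^ 2)⁻¹ • (a • x - b • N x))
  rw [hTy] at hxy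
  exact eq_sub_of_add_eq' hxy

variable {X : Type*} [NormedAddCommGroup X] [InnerProductSpace ℝ X] [CompleteSpace X]

theorem stmt18_general (N : X →L[ℝ] X) (hadj : ContinuousLinearMap.adjoint N = -N)
    (hN2 : ∀ x : X, N (N x) = -x) (lam : ℝ)
    (T : X → X) (hT : ∀ x : X, T x = (1 - lam) • x + lam • N x)
    (Alam : X → X)
    (hA2 : ∀ x : X, T x + Alam (T x) = x) :
    -- (i) N is nonexpansive, indeed an isometry
    (∀ x y : X, ‖N x - N y‖ ≤ ‖x - y‖) ∧ (∀ x : X, ‖N x‖ = ‖x‖) ∧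
    -- (ii) the explicit formula for Alam
    (∀ x : X, Alam x =
      (lam / ((1 - lam) ^ 2 + lam ^ 2)) • ((1 - 2 * lam) • x - N x)) ∧
    -- (iii) Alam is ρ-monotone with ρ = lam (1 - 2 lam) / (lam² + (1 - lam)²)
    (∀ x : X, ⟪x, Alam x⟫ = (lam * (1 - 2 * lam) / ((1 - lam) ^ 2 + lam ^ 2)) * ‖x‖ ^ 2) ∧
    (∀ x y : X, (lam * (1 - 2 * lam) / (lam ^ 2 + (1 - lam) ^ 2)) * ‖x - y‖ ^ 2 ≤
      ⟪x - y, Alam x - Alam y⟫) ∧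
    -- (iv) for lam > 0, Alam is ρ-comonotone with ρ = (1 - 2 lam) / (2 lam)
    (0 < lam →
      (∀ x : X, ⟪x, Alam x⟫ = ((1 - 2 * lam) / (2 * lam)) * ‖Alam x‖ ^ 2) ∧
      ∀ x y : X, ((1 - 2 * lam) / (2 * lam)) * ‖Alam x - Alam y‖ ^ 2 ≤
        ⟪x - y, Alam x - Alam y⟫) := by
  have hN := inner_apply_eq_neg_of_adjoint_eq_neg hadj
  have hiso := norm_apply_eq_of_apply_apply_eq_neg hN hN2
  have hD : (1 - lam) ^ 2 + lam ^ 2 ≠ 0 := by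
    nlinarith [sq_nonneg (1 - lam), sq_nonneg lam, sq_nonneg (1 - 2 * lam)]
  set c := lam / ((1 - lam) ^ 2 + lam ^ 2) with hc_def
  have hA : ∀ x, Alam x = (c * (1 - 2 * lam)) • x + (-c) • N x := by
    intro x
    rw [resolvent_sub_id_apply_eq (N := (N : X →ₗ[ℝ] X)) hN2 hD hT hA2, hc_def]
    match_scalars
    · field_simp
      ring
    · field_simp
  have hA_sub : ∀ x y, Alam x - Alam y = (c * (1 - 2 * lam)) • (x - y) + (-c) • N (x - y) := by
    intro x y
    rw [hA, hA, map_sub]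
    module
  have hcoeff_comono (hlam : 0 < lam) :
      (1 - 2 * lam) / (2 * lam) * ((c * (1 - 2 * lam)) ^ 2 + (-c) ^ 2) = c * (1 - 2 * lam) := by
    rw [hc_def]
    field_simp
    ring
  refine ⟨fun x y => by rw [← map_sub, hiso], hiso, fun x => by rw [hA]; module,
    fun x => by rw [hA, inner_smul_add_smul_apply hN, hc_def]; ring,
    fun x y => le_of_eq ?_, fun hlam => ⟨fun x => ?_, fun x y => le_of_eq ?_⟩⟩
  · rw [hA_sub, inner_smul_add_smul_apply hN, hc_def]
    ring
  · rw [hA, inner_smul_add_smul_apply hN, norm_smul_add_smul_apply_sq hN hN2, ← mul_assoc,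
      hcoeff_comono hlam]
  · rw [hA_sub, inner_smul_add_smul_apply hN, norm_smul_add_smul_apply_sq hN hN2, ← mul_assoc,
      hcoeff_comono hlam]

theorem stmt18 (N : X →L[ℝ] X) (hadj : ContinuousLinearMap.adjoint N = -N)
    (hN2 : ∀ x : X, N (N x) = -x) (lam : ℝ) (h0 : 0 ≤ lam) (h1 : lam < 1)
    (T : X → X) (hT : ∀ x : X, T x = (1 - lam) • x + lam • N x)
    -- `Alam = (T)⁻¹ - Id`, i.e. `Id + Alam` is the inverse of `T`
    (Alam : X → X) (hA1 : ∀ x : X, T (x + Alam x) = x)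
    (hA2 : ∀ x : X, T x + Alam (T x) = x) :
    -- (i) N is nonexpansive, indeed an isometry
    (∀ x y : X, ‖N x - N y‖ ≤ ‖x - y‖) ∧ (∀ x : X, ‖N x‖ = ‖x‖) ∧
    -- (ii) the explicit formula for Alam
    (∀ x : X, Alam x =
      (lam / ((1 - lam) ^ 2 + lam ^ 2)) • ((1 - 2 * lam) • x - N x)) ∧
    -- (iii) Alam is ρ-monotone with ρ = lam (1 - 2 lam) / (lam² + (1 - lam)²)
    (∀ x : X, ⟪x, Alam x⟫ = (lam * (1 - 2 * lam) / ((1 - lam) ^ 2 + lam ^ 2)) * ‖x‖ ^ 2) ∧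
    (∀ x y : X, (lam * (1 - 2 * lam) / (lam ^ 2 + (1 - lam) ^ 2)) * ‖x - y‖ ^ 2 ≤
      ⟪x - y, Alam x - Alam y⟫) ∧
    -- (iv) for lam > 0, Alam is ρ-comonotone with ρ = (1 - 2 lam) / (2 lam)
    (0 < lam →
      (∀ x : X, ⟪x, Alam x⟫ = ((1 - 2 * lam) / (2 * lam)) * ‖Alam x‖ ^ 2) ∧
      ∀ x y : X, ((1 - 2 * lam) / (2 * lam)) * ‖Alam x - Alam y‖ ^ 2 ≤
        ⟪x - y, Alam x - Alam y⟫) :=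
  stmt18_general N hadj hN2 lam T hT Alam hA2
end
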